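/- Let n ≥ 2, let x_1 ≤ ⋯ ≤ x_n be real numbers, and let Q : ℝ → ℝ be any function satisfying Q(t) = x_i for all t ∈ ((i−1)/n, i/n] and each i = 1, …, n. Let z_1 ≤ ⋯ ≤ z_{n−1} be real numbers with Φ(z_i) = i/n for i = 1, …, n−1. Then ∫_{ℝ} Q(Φ(z)) · z · φ(z) dz = Σ_{i=1}^{n−1} (x_{i+1} − x_i) φ(z_i). -/

import Mathlib

/-!
As `Φ` is strictly increasing with `Φ (z i) = i / n`, the composite `Q ∘ Φ` is the step function
`x 1 + ∑ i, (x (i + 1) - x i) • 𝟙 (z i, ∞)`. Since `-φ` is an antiderivative of `t φ(t)` vanishing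
at `±∞`, we have `∫ t φ(t) dt = 0` and `∫_{z}^{∞} t φ(t) dt = φ(z)`, and the formula follows term by term.
-/

open MeasureTheory

/-- The standard normal density `φ(z) = (2π)^{-1/2} exp(-z²/2)`. -/
noncomputable def stdGaussianPDF (z : ℝ) : ℝ :=
  (Real.sqrt (2 * Real.pi))⁻¹ * Real.exp (-z ^ 2 / 2)

/-- The standard normal cumulative distribution function `Φ(t) = ∫_{-∞}^t φ(z) dz`. -/
noncomputable def stdGaussianCDF (t : ℝ) : ℝ :=
  ∫ z in Set.Iic t, stdGaussianPDF z

open Set Filter Topology ProbabilityTheory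

lemma stdGaussianPDF_eq_gaussianPDFReal : stdGaussianPDF = gaussianPDFReal 0 1 := by
  ext z
  simp [stdGaussianPDF, gaussianPDFReal]

lemma stdGaussianPDF_pos (z : ℝ) : 0 < stdGaussianPDF z := by
  rw [stdGaussianPDF_eq_gaussianPDFReal]
  exact gaussianPDFReal_pos 0 1 z one_ne_zero

lemma integrable_stdGaussianPDF : Integrable stdGaussianPDF :=
  stdGaussianPDF_eq_gaussianPDFReal ▸ integrable_gaussianPDFReal 0 1

lemma integral_stdGaussianPDF : ∫ z, stdGaussianPDF z = 1 :=
  stdGaussianPDF_eq_gaussianPDFReal ▸ integral_gaussianPDFReal_eq_one 0 one_ne_zero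

lemma hasDerivAt_neg_stdGaussianPDF (t : ℝ) :
    HasDerivAt (fun s ↦ -stdGaussianPDF s) (t * stdGaussianPDF t) t := by
  have h : HasDerivAt (fun s : ℝ ↦ -s ^ 2 / 2) (-t) t :=
    ((hasDerivAt_pow 2 t).neg.div_const 2).congr_deriv (by push_cast; ring)
  exact (h.exp.const_mul (Real.sqrt (2 * Real.pi))⁻¹).neg.congr_deriv
    (by simp only [stdGaussianPDF]; ring)

lemma tendsto_stdGaussianPDF_cocompact : Tendsto stdGaussianPDF (cocompact ℝ) (𝓝 0) := by
  have h := (tendsto_rpow_abs_mul_exp_neg_mul_sq_cocompact (by norm_num : (0 : ℝ) < 1 / 2)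
    0).const_mul (Real.sqrt (2 * Real.pi))⁻¹
  rw [mul_zero] at h
  refine h.congr fun z ↦ ?_
  simp only [stdGaussianPDF, Real.rpow_zero, one_mul]
  ring_nf

lemma integrable_mul_stdGaussianPDF : Integrable fun t ↦ t * stdGaussianPDF t := by
  have h := (integrable_mul_exp_neg_mul_sq (by norm_num : (0 : ℝ) < 1 / 2)).const_mul
    (Real.sqrt (2 * Real.pi))⁻¹
  refine h.congr (ae_of_all _ fun z ↦ ?_)
  simp only [stdGaussianPDF]
  ring_nf

lemma integral_mul_stdGaussianPDF : ∫ t, t * stdGaussianPDF t = 0 := by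
  have h := integral_of_hasDerivAt_of_tendsto hasDerivAt_neg_stdGaussianPDF
    integrable_mul_stdGaussianPDF
    (tendsto_stdGaussianPDF_cocompact.neg.mono_left atBot_le_cocompact)
    (tendsto_stdGaussianPDF_cocompact.neg.mono_left atTop_le_cocompact)
  simpa using h

lemma integral_Ioi_mul_stdGaussianPDF (a : ℝ) :
    ∫ t in Ioi a, t * stdGaussianPDF t = stdGaussianPDF a := by
  have h := integral_Ioi_of_hasDerivAt_of_tendsto' (a := a)
    (fun t _ ↦ hasDerivAt_neg_stdGaussianPDF t)
    integrable_mul_stdGaussianPDF.integrableOn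
    (tendsto_stdGaussianPDF_cocompact.neg.mono_left atTop_le_cocompact)
  simpa using h

lemma setIntegral_stdGaussianPDF_pos {s : Set ℝ} (h : volume s ≠ 0) :
    0 < ∫ z in s, stdGaussianPDF z := by
  rw [setIntegral_pos_iff_support_of_nonneg_ae (ae_of_all _ fun z ↦ (stdGaussianPDF_pos z).le)
    integrable_stdGaussianPDF.integrableOn,
    (eq_univ_of_forall fun z ↦ (stdGaussianPDF_pos z).ne' : Function.support _ = univ), univ_inter]
  exact pos_iff_ne_zero.mpr h

lemma strictMono_stdGaussianCDF : StrictMono stdGaussianCDF := by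
  intro a b hab
  have h : stdGaussianCDF b - stdGaussianCDF a = ∫ z in Ioc a b, stdGaussianPDF z := by
    rw [stdGaussianCDF, stdGaussianCDF, intervalIntegral.integral_Iic_sub_Iic
      integrable_stdGaussianPDF.integrableOn integrable_stdGaussianPDF.integrableOn,
      intervalIntegral.integral_of_le hab.le]
  have := setIntegral_stdGaussianPDF_pos (s := Ioc a b) (by simpa using hab)
  linarith

lemma stdGaussianCDF_pos (t : ℝ) : 0 < stdGaussianCDF t :=
  setIntegral_stdGaussianPDF_pos (by simp)

lemma stdGaussianCDF_le_one (t : ℝ) : stdGaussianCDF t ≤ 1 :=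
  integral_stdGaussianPDF ▸ setIntegral_le_integral integrable_stdGaussianPDF
    (ae_of_all _ fun z ↦ (stdGaussianPDF_pos z).le)

lemma integral_step_mul_stdGaussianPDF (c : ℝ) (a z : ℕ → ℝ) (s : Finset ℕ) :
    ∫ t, (c + ∑ i ∈ s, if z i < t then a i else 0) * t * stdGaussianPDF t
      = ∑ i ∈ s, a i * stdGaussianPDF (z i) := by
  set g := fun t ↦ t * stdGaussianPDF t
  have hg : Integrable g := integrable_mul_stdGaussianPDF
  have hsplit : ∀ t, (c + ∑ i ∈ s, if z i < t then a i else 0) * t * stdGaussianPDF t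
      = c * g t + ∑ i ∈ s, a i * (Ioi (z i)).indicator g t := by
    intro t
    simp only [g, indicator, mem_Ioi, add_mul, Finset.sum_mul, mul_assoc]
    congr 1
    refine Finset.sum_congr rfl fun i _ ↦ ?_
    split_ifs <;> ring
  simp_rw [hsplit]
  rw [integral_add (hg.const_mul c)
      (integrable_finsetSum s fun i _ ↦ (hg.indicator measurableSet_Ioi).const_mul (a i)),
    integral_const_mul, integral_mul_stdGaussianPDF, mul_zero, zero_add,
    integral_finsetSum s fun i _ ↦ (hg.indicator measurableSet_Ioi).const_mul (a i)]
  refine Finset.sum_congr rfl fun i _ ↦ ?_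
  rw [integral_const_mul, integral_indicator measurableSet_Ioi, integral_Ioi_mul_stdGaussianPDF]

lemma eq_add_sum_jumps_of_eq_on_Ioc {n : ℕ} (hn : 0 < n) {x : ℕ → ℝ} {Q : ℝ → ℝ}
    (hQ : ∀ i, 1 ≤ i → i ≤ n → ∀ t : ℝ, ((i : ℝ) - 1) / n < t → t ≤ (i : ℝ) / n → Q t = x i)
    {s : ℝ} (hs₀ : 0 < s) (hs₁ : s ≤ 1) :
    Q s = x 1 + ∑ i ∈ Finset.Icc 1 (n - 1), if (i : ℝ) / n < s then x (i + 1) - x i else 0 := by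
  have hn' : (0 : ℝ) < n := by exact_mod_cast hn
  -- `s` lies in the `k`-th cell `((k - 1) / n, k / n]`
  set k := ⌈s * n⌉₊
  have hk₁ : 1 ≤ k := Nat.ceil_pos.mpr (mul_pos hs₀ hn')
  have hkn : k ≤ n := Nat.ceil_le.mpr (by nlinarith)
  have hQs : Q s = x k := by
    refine hQ k hk₁ hkn s ?_ ?_
    · rw [div_lt_iff₀ hn']
      linarith [Nat.ceil_lt_add_one (mul_pos hs₀ hn').le]
    · rw [le_div_iff₀ hn']
      exact Nat.le_ceil _
  have hjumps : (Finset.Icc 1 (n - 1)).filter (fun i : ℕ ↦ (i : ℝ) / n < s) = Finset.Ico 1 k := by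
    ext i
    simp only [Finset.mem_filter, Finset.mem_Icc, Finset.mem_Ico, div_lt_iff₀ hn', ← Nat.lt_ceil]
    omega
  rw [hQs, Finset.sum_ite, Finset.sum_const_zero, add_zero, hjumps, Finset.sum_Ico_sub _ hk₁]
  ring

theorem integral_quantile_linear_gaussian_general
    (n : ℕ) (hn : 2 ≤ n) (x : ℕ → ℝ)
    (Q : ℝ → ℝ)
    (hQ : ∀ i, 1 ≤ i → i ≤ n → ∀ t : ℝ,
        ((i : ℝ) - 1) / n < t → t ≤ (i : ℝ) / n → Q t = x i)
    (z : ℕ → ℝ)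
    (hz : ∀ i, 1 ≤ i → i ≤ n - 1 → stdGaussianCDF (z i) = (i : ℝ) / n) :
    ∫ t : ℝ, Q (stdGaussianCDF t) * t * stdGaussianPDF t
      = ∑ i ∈ Finset.Icc 1 (n - 1), (x (i + 1) - x i) * stdGaussianPDF (z i) := by
  have hQΦ : ∀ t, Q (stdGaussianCDF t)
      = x 1 + ∑ i ∈ Finset.Icc 1 (n - 1), if z i < t then x (i + 1) - x i else 0 := by
    intro t
    rw [eq_add_sum_jumps_of_eq_on_Ioc (by omega) hQ (stdGaussianCDF_pos t)
      (stdGaussianCDF_le_one t)]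
    refine congrArg _ (Finset.sum_congr rfl fun i hi ↦ ?_)
    obtain ⟨hi₁, hi₂⟩ := Finset.mem_Icc.mp hi
    simp only [← hz i hi₁ hi₂, strictMono_stdGaussianCDF.lt_iff_lt]
  simp_rw [hQΦ]
  exact integral_step_mul_stdGaussianPDF _ _ _ _

/-- If `Q` is the empirical quantile function of sorted reals
`x 1 ≤ ⋯ ≤ x n` and `z 1 ≤ ⋯ ≤ z (n-1)` are Gaussian quantiles with `Φ (z i) = i/n`,
then `∫_ℝ Q(Φ(z)) z φ(z) dz = Σ_{i=1}^{n-1} (x (i+1) - x i) φ(z i)`. -/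
theorem integral_quantile_linear_gaussian
    (n : ℕ) (hn : 2 ≤ n) (x : ℕ → ℝ)
    (hxmono : ∀ i, 1 ≤ i → i < n → x i ≤ x (i + 1))
    (Q : ℝ → ℝ)
    (hQ : ∀ i, 1 ≤ i → i ≤ n → ∀ t : ℝ,
        ((i : ℝ) - 1) / n < t → t ≤ (i : ℝ) / n → Q t = x i)
    (z : ℕ → ℝ)
    (hzmono : ∀ i, 1 ≤ i → i + 1 ≤ n - 1 → z i ≤ z (i + 1))
    (hz : ∀ i, 1 ≤ i → i ≤ n - 1 → stdGaussianCDF (z i) = (i : ℝ) / n) :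
    ∫ t : ℝ, Q (stdGaussianCDF t) * t * stdGaussianPDF t
      = ∑ i ∈ Finset.Icc 1 (n - 1), (x (i + 1) - x i) * stdGaussianPDF (z i) :=
  integral_quantile_linear_gaussian_general n hn x Q hQ z hz
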